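/- Let u : 𝕋 → ℝ be a smooth 2π-periodic function attaining its maximum at x̄. Then Λu(x̄) ≥ u(x̄) − ⟨u⟩, where Λ = (−∂ₓₓ)^{1/2} is the half-Laplacian on the torus and ⟨u⟩ = (1/2π)∫_𝕋 u dx. -/

import Mathlib

open Real MeasureTheory intervalIntegral

/-- The half-Laplacian on the 2π-periodic torus, via its kernel representation
(principal value understood). -/
noncomputable def halfLap (u : ℝ → ℝ) (x : ℝ) : ℝ :=
  (1 / (2 * Real.pi)) * ∫ y in (-Real.pi)..Real.pi, (u x - u y) / (Real.sin ((x - y) / 2)) ^ 2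

/-- Mean value of a 2π-periodic function on the torus. -/
noncomputable def torusMean (u : ℝ → ℝ) : ℝ :=
  (1 / (2 * Real.pi)) * ∫ y in (-Real.pi)..Real.pi, u y

/-- `sin` squared bound: `(2/π * x)^2 ≤ sin x ^ 2` for `|x| ≤ π/2`. -/
lemma sin_sq_lower {x : ℝ} (hx : |x| ≤ π / 2) : (2 / π * x) ^ 2 ≤ Real.sin x ^ 2 := by
  have h1 : 2 / π * |x| ≤ Real.sin |x| :=
    Real.mul_le_sin (abs_nonneg x) hx
  have h2 : (2 / π * |x|) ^ 2 ≤ Real.sin |x| ^ 2 := by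
    apply sq_le_sq' _ h1
    have : 0 ≤ 2 / π * |x| := by positivity
    linarith [Real.neg_one_le_sin |x|, this]
  rcases abs_cases x with ⟨h, _⟩ | ⟨h, _⟩
  · rwa [h] at h2
  · rw [h] at h2
    simpa [neg_sq, mul_neg, Real.sin_neg] using h2

/-- At a point of maximum, Λu(x̄) ≥ u(x̄) − ⟨u⟩. -/
theorem stmt2 (u : ℝ → ℝ) (hu : ContDiff ℝ (⊤ : ℕ∞) u)
    (hper : Function.Periodic u (2 * Real.pi))
    (xbar : ℝ) (hmax : ∀ x, u x ≤ u xbar) :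
    halfLap u xbar ≥ u xbar - torusMean u := by
  have hπ : (0:ℝ) < π := Real.pi_pos
  have hu' : ContDiff ℝ (↑(⊤:ℕ∞)) u := hu.of_le (by simp)
  set u1 := deriv u with hu1def
  have hderiv := contDiff_infty_iff_deriv.mp hu'
  have hu1 : ContDiff ℝ (↑(⊤:ℕ∞)) u1 := hderiv.2
  set u2 := deriv u1 with hu2def
  have hu1d : Differentiable ℝ u1 := (contDiff_infty_iff_deriv.mp hu1).1
  have hu2c : Continuous u2 := (contDiff_infty_iff_deriv.mp hu1).2.continuous
  -- bound on u2 on the compact interval K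
  set K := Set.Icc (xbar - π) (xbar + π) with hK
  obtain ⟨z, hz, hzmax'⟩ := (isCompact_Icc (a := xbar - π) (b := xbar + π)).exists_isMaxOn
    ⟨xbar, by constructor <;> linarith⟩ (hu2c.abs.continuousOn)
  have hzmax : ∀ x ∈ Set.Icc (xbar - π) (xbar + π), |u2 x| ≤ |u2 z| := fun x hx => hzmax' hx
  set M := |u2 z| with hM
  have hM0 : 0 ≤ M := abs_nonneg _
  have hxK : xbar ∈ K := by constructor <;> linarith
  -- derivative vanishes at the max
  have hd0 : u1 xbar = 0 := by
    have : IsLocalMax u xbar := Filter.Eventually.of_forall hmax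
    exact this.deriv_eq_zero
  -- |u1 t| ≤ M * |t - xbar| on K
  have h1 : ∀ t ∈ K, |u1 t| ≤ M * |t - xbar| := by
    intro t ht
    have := (convex_Icc (xbar - π) (xbar + π)).norm_image_sub_le_of_norm_deriv_le
      (f := u1) (fun x _ => hu1d x) (fun x hx => hzmax x hx) hxK ht
    simpa [hd0, Real.norm_eq_abs] using this
  -- quadratic bound near xbar
  have h2 : ∀ y, |y - xbar| ≤ π → u xbar - u y ≤ M * (y - xbar) ^ 2 := by
    intro y hy
    have hyK : y ∈ K := by
      rcases abs_le.mp hy with ⟨ha, hb⟩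
      constructor <;> linarith
    have hint : u y - u xbar = ∫ t in xbar..y, u1 t := by
      rw [intervalIntegral.integral_deriv_eq_sub (fun t _ => hderiv.1 t)
        (hu1.continuous.intervalIntegrable _ _)]
    have hbound : ∀ t ∈ Set.uIoc xbar y, ‖u1 t‖ ≤ M * |y - xbar| := by
      intro t ht
      have ht' : t ∈ Set.uIcc xbar y := Set.uIoc_subset_uIcc ht
      have htK : t ∈ K := by
        simp only [hK, Set.mem_Icc]
        rcases abs_le.mp hy with ⟨ha, hb⟩
        rcases Set.mem_uIcc.mp ht' with ⟨h1', h2'⟩ | ⟨h1', h2'⟩ <;> constructor <;> linarith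
      have h3 : |t - xbar| ≤ |y - xbar| := by
        rcases Set.mem_uIcc.mp ht' with ⟨ha, hb⟩ | ⟨ha, hb⟩ <;>
          rw [abs_le] <;> constructor <;>
          cases' abs_cases (y - xbar) with h h <;> linarith [h.1]
      calc ‖u1 t‖ = |u1 t| := rfl
        _ ≤ M * |t - xbar| := h1 t htK
        _ ≤ M * |y - xbar| := by nlinarith
    have := intervalIntegral.norm_integral_le_of_norm_le_const hbound
    rw [← hint] at this
    have habs : |u y - u xbar| ≤ M * |y - xbar| * |y - xbar| := this
    have : u xbar - u y ≤ M * |y - xbar| * |y - xbar| := by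
      cases' abs_cases (u y - u xbar) with h h <;> linarith [habs]
    calc u xbar - u y ≤ M * |y - xbar| * |y - xbar| := this
      _ = M * (y - xbar)^2 := by rw [mul_assoc, ← sq, sq_abs]
  -- global bound via periodicity: u xbar - u y ≤ M π² sin²((xbar - y)/2)
  have h3 : ∀ y : ℝ, u xbar - u y ≤ M * π ^ 2 * Real.sin ((xbar - y) / 2) ^ 2 := by
    intro y
    set θ := (xbar - y) / 2 with hθ
    set n := round (θ / π) with hn
    set θ' := θ - n * π with hθ'
    have hθ'small : |θ'| ≤ π / 2 := by
      have hπ0 : (π:ℝ) ≠ 0 := hπ.ne'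
      have key : (θ / π - n) * π = θ' := by rw [hθ']; field_simp
      calc |θ'| = |θ / π - n| * π := by rw [← key, abs_mul, abs_of_pos hπ]
        _ ≤ (1/2) * π := mul_le_mul_of_nonneg_right (abs_sub_round _) hπ.le
        _ = π / 2 := by ring
    set y' := xbar - 2 * θ' with hy'
    have hyy' : y = y' - n * (2 * π) := by rw [hy', hθ', hθ]; ring
    have huy : u y = u y' := by
      rw [hyy']
      exact hper.sub_int_mul_eq n
    have hsin : Real.sin θ ^ 2 = Real.sin θ' ^ 2 := by
      have hθeq : θ = θ' + n * π := by rw [hθ']; ring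
      have hsq : ((-1:ℝ)^n)^2 = 1 := by
        rw [sq, ← zpow_add₀ (by norm_num : (-1:ℝ) ≠ 0)]
        exact Even.neg_one_zpow ⟨n, rfl⟩
      rw [hθeq, Real.sin_add_int_mul_pi, mul_pow, hsq, one_mul]
    have hy'close : |y' - xbar| ≤ π := by
      rw [hy']
      have : |xbar - 2 * θ' - xbar| = 2 * |θ'| := by
        rw [show xbar - 2 * θ' - xbar = -(2*θ') by ring, abs_neg, abs_mul]
        norm_num
      rw [this]; linarith
    have hq := h2 y' hy'close
    have hsinlow : (2 / π * θ') ^ 2 ≤ Real.sin θ' ^ 2 := sin_sq_lower hθ'small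
    rw [huy, hsin]
    have h4 : M * (y' - xbar) ^ 2 = M * (4 * θ' ^ 2) := by rw [hy']; ring
    have h5 : M * π ^ 2 * (2 / π * θ') ^ 2 = M * (4 * θ' ^ 2) := by
      field_simp; ring
    have h6 : M * π ^ 2 * (2 / π * θ') ^ 2 ≤ M * π ^ 2 * Real.sin θ' ^ 2 :=
      mul_le_mul_of_nonneg_left hsinlow (by positivity)
    calc u xbar - u y' ≤ M * (y' - xbar) ^ 2 := hq
      _ = M * π ^ 2 * (2 / π * θ') ^ 2 := by rw [h4, ← h5]
      _ ≤ M * π ^ 2 * Real.sin θ' ^ 2 := h6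
  -- the integrand
  set f : ℝ → ℝ := fun y => (u xbar - u y) / Real.sin ((xbar - y) / 2) ^ 2 with hf
  set g : ℝ → ℝ := fun y => u xbar - u y with hg
  have hf0 : ∀ y, 0 ≤ f y := fun y =>
    div_nonneg (sub_nonneg.mpr (hmax y)) (sq_nonneg _)
  have hfC : ∀ y, f y ≤ M * π ^ 2 := by
    intro y
    by_cases hs : Real.sin ((xbar - y) / 2) = 0
    · simp [hf, hs]; positivity
    · rw [hf, div_le_iff₀ (by positivity)]
      calc u xbar - u y ≤ M * π ^ 2 * Real.sin ((xbar - y) / 2) ^ 2 := h3 y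
        _ = M * π ^ 2 * Real.sin ((xbar - y) / 2) ^ 2 := rfl
  have hgf : ∀ y, g y ≤ f y := by
    intro y
    by_cases hs : Real.sin ((xbar - y) / 2) = 0
    · have : u xbar - u y ≤ 0 := by
        have := h3 y; rw [hs] at this; simpa using this
      exact this.trans (hf0 y)
    · rw [hf, le_div_iff₀ (by positivity)]
      have hs1 : Real.sin ((xbar - y) / 2) ^ 2 ≤ 1 := Real.sin_sq_le_one _
      have hg0 : 0 ≤ u xbar - u y := sub_nonneg.mpr (hmax y)
      calc (u xbar - u y) * Real.sin ((xbar - y) / 2) ^ 2 ≤ (u xbar - u y) * 1 := by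
            nlinarith
        _ = u xbar - u y := mul_one _
  -- integrability of f
  have hfmeas : Measurable f := by
    apply Measurable.div
    · exact (measurable_const.sub hu.continuous.measurable)
    · exact ((Real.continuous_sin.comp (by continuity)).pow 2).measurable
  have hfint : IntervalIntegrable f volume (-π) π := by
    rw [intervalIntegrable_iff, Set.uIoc]
    refine ⟨hfmeas.aestronglyMeasurable, ?_⟩
    apply MeasureTheory.HasFiniteIntegral.of_bounded (C := M * π ^ 2)
    filter_upwards with y
    rw [Real.norm_eq_abs, abs_of_nonneg (hf0 y)]
    exact hfC y
  have hgint : IntervalIntegrable g volume (-π) π :=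
    (continuous_const.sub hu.continuous).intervalIntegrable _ _
  -- comparison of integrals
  have hmono : (∫ y in (-π)..π, g y) ≤ ∫ y in (-π)..π, f y :=
    intervalIntegral.integral_mono_on (by linarith) hgint hfint (fun y _ => hgf y)
  -- compute ∫ g
  have hgval : (∫ y in (-π)..π, g y) = 2 * π * u xbar - ∫ y in (-π)..π, u y := by
    rw [hg, intervalIntegral.integral_sub intervalIntegrable_const
      (hu.continuous.intervalIntegrable _ _), intervalIntegral.integral_const, smul_eq_mul]
    ring
  -- conclude
  have hc : (0:ℝ) ≤ 1 / (2 * π) := by positivity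
  have := mul_le_mul_of_nonneg_left hmono hc
  rw [hgval] at this
  have heq : (1 / (2 * π)) * (2 * π * u xbar - ∫ y in (-π)..π, u y)
      = u xbar - torusMean u := by
    rw [torusMean]
    field_simp
  rw [heq] at this
  calc u xbar - torusMean u ≤ (1 / (2 * π)) * ∫ y in (-π)..π, f y := this
    _ = halfLap u xbar := by rw [halfLap]
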